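/- arXiv:2001.02659 — 5 statements merged into one kernel-verified Lean document; each statement's English description precedes it below -/
import Mathlib

section
/- For a monotone function f on a complete lattice, the accumulation principle holds: y ⊑ G_f(r) if and only if y ⊑ G_f(r ⊔ y). -/
def pG {C : Type*} [CompleteLattice C] (f : C →o C) (r : C) : C :=
  OrderHom.gfp ⟨fun y => f (r ⊔ y), fun _ _ h => f.mono (sup_le_sup_left h r)⟩

section pG

variable {C : Type*} [CompleteLattice C] (f : C →o C) {r x y : C}

theorem pG_unfold (r : C) : f (r ⊔ pG f r) = pG f r :=
  OrderHom.map_gfp ⟨fun y => f (r ⊔ y), fun _ _ h => f.mono (sup_le_sup_left h r)⟩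

theorem le_pG_of_le (h : x ≤ f (r ⊔ x)) : x ≤ pG f r :=
  OrderHom.le_gfp _ h

theorem pG_monotone : Monotone (pG f) := fun r _ hrs =>
  le_pG_of_le f <| (pG_unfold f r).ge.trans (f.mono (sup_le_sup_right hrs _))

/-- Once `y` lies below `pG f (r ⊔ y)` it is absorbed by the join with `pG f (r ⊔ y)`, which is
therefore a post-fixed point of `x ↦ f (r ⊔ x)`. -/
theorem pG_sup_le_of_le_pG_sup (h : y ≤ pG f (r ⊔ y)) : pG f (r ⊔ y) ≤ pG f r :=
  le_pG_of_le f <| le_of_eq <| calc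
    pG f (r ⊔ y) = f (r ⊔ y ⊔ pG f (r ⊔ y)) := (pG_unfold f _).symm
    _ = f (r ⊔ pG f (r ⊔ y)) := by rw [sup_assoc, sup_eq_right.mpr h]

end pG

theorem pG_acc {C : Type*} [CompleteLattice C] (f : C →o C) (r y : C) :
    y ≤ pG f r ↔ y ≤ pG f (r ⊔ y) :=
  ⟨fun h => h.trans (pG_monotone f le_sup_left),
    fun h => h.trans (pG_sup_le_of_le_pG_sup f h)⟩
end

section
/- The companion cpn_f, defined as the pointwise join of all monotone functions compatible with f, is itself monotone and compatible with f. -/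
/-- The companion: pointwise join of all monotone functions compatible with `f`. -/
def cpn {C : Type*} [CompleteLattice C] (f : C →o C) (x : C) : C :=
  sSup { y | ∃ g : C →o C, (∀ z, g (f z) ≤ f (g z)) ∧ y = g x }

section Companion

variable {C : Type*} [CompleteLattice C] {f : C →o C}

theorem le_cpn {g : C →o C} (hg : ∀ z, g (f z) ≤ f (g z)) (x : C) : g x ≤ cpn f x :=
  le_sSup ⟨g, hg, rfl⟩

theorem cpn_le {x y : C} (h : ∀ g : C →o C, (∀ z, g (f z) ≤ f (g z)) → g x ≤ y) :
    cpn f x ≤ y :=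
  sSup_le <| by
    rintro _ ⟨g, hg, rfl⟩
    exact h g hg

end Companion

theorem cpn_monotone_compatible {C : Type*} [CompleteLattice C] (f : C →o C) :
    Monotone (cpn f) ∧ ∀ x, cpn f (f x) ≤ f (cpn f x) :=
  ⟨fun _ y hxy => cpn_le fun g hg => (g.monotone hxy).trans (le_cpn hg y),
    fun x => cpn_le fun _ hg => (hg x).trans (f.monotone (le_cpn hg x))⟩
end

section
/- The greatest fixed point of f coincides with the companion applied to bottom: gfp(f) = cpn_f(⊥). -/
/-! The constant map at `gfp f` is compatible with `f`, so `gfp f ≤ cpn f ⊥`. Conversely a compatible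
`g` maps the post-fixed point `gfp f` to a post-fixed point, so `g ⊥ ≤ g (gfp f) ≤ gfp f`. -/

namespace OrderHom

variable {C : Type*} [CompleteLattice C] {f g : C →o C}

theorem le_cpn_of_compatible (hg : ∀ z, g (f z) ≤ f (g z)) (x : C) : g x ≤ cpn f x :=
  le_sSup ⟨g, hg, rfl⟩

theorem gfp_le_cpn (f : C →o C) (x : C) : gfp f ≤ cpn f x :=
  le_cpn_of_compatible (g := const C (gfp f)) (fun _ => (f.map_gfp).ge) x

theorem map_gfp_le_gfp_of_compatible (hg : ∀ z, g (f z) ≤ f (g z)) : g (gfp f) ≤ gfp f :=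
  le_gfp f <| calc
    g (gfp f) = g (f (gfp f)) := by rw [map_gfp]
    _ ≤ f (g (gfp f)) := hg _

theorem cpn_le_gfp {x : C} (hx : x ≤ gfp f) : cpn f x ≤ gfp f :=
  sSup_le <| by
    rintro _ ⟨g, hg, rfl⟩
    exact (g.monotone hx).trans (map_gfp_le_gfp_of_compatible hg)

end OrderHom

theorem gfp_eq_cpn_bot {C : Type*} [CompleteLattice C] (f : C →o C) :
    OrderHom.gfp f = cpn f ⊥ :=
  le_antisymm (OrderHom.gfp_le_cpn f ⊥) (OrderHom.cpn_le_gfp bot_le)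
end

section
/- Weak bisimilarity ≈ on streams is symmetric and transitive, hence an equivalence relation. -/
/-- Shapes of stream constructors: end, internal step, visible event. -/
inductive SShape : Type where
  | eps : SShape
  | tau : SShape
  | vis : ℕ → SShape

/-- Polynomial functor for streams: ε has no child, τ and β(n) have one child. -/
def SP : PFunctor :=
  ⟨SShape, fun a => match a with | .eps => Empty | .tau => Unit | .vis _ => Unit⟩

/-- Coinductive streams, as the final coalgebra (M-type) of `SP`. -/
def StreamT : Type := SP.M

def seps : StreamT := PFunctor.M.mk ⟨SShape.eps, Empty.elim⟩
def stau (s : StreamT) : StreamT := PFunctor.M.mk ⟨SShape.tau, fun _ => s⟩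
def svis (n : ℕ) (s : StreamT) : StreamT := PFunctor.M.mk ⟨SShape.vis n, fun _ => s⟩
/-- The mixed inductive-coinductive functor for weak bisimilarity:
corecursive matching of ε/ε, τ/τ, β(n)/β(n) plus inductive stripping
of a single τ on either side. -/
inductive EuttF (X : StreamT → StreamT → Prop) : StreamT → StreamT → Prop where
  | eps : EuttF X seps seps
  | tau {s t : StreamT} : X s t → EuttF X (stau s) (stau t)
  | vis {n : ℕ} {s t : StreamT} : X s t → EuttF X (svis n s) (svis n t)
  | tauL {s t : StreamT} : EuttF X s t → EuttF X (stau s) t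
  | tauR {s t : StreamT} : EuttF X s t → EuttF X s (stau t)

/-- Weak bisimilarity (equivalence up-to-tau): the greatest fixed point of `EuttF`. -/
def Eutt (s t : StreamT) : Prop :=
  ∃ R : StreamT → StreamT → Prop, (∀ a b, R a b → EuttF R a b) ∧ R s t

/-!
Symmetry: the mirror image of a post-fixed point of `EuttF` is again one, since `EuttF` is
symmetric in its two arguments.

Transitivity: the composite `Eutt ∘r Eutt` is a post-fixed point. Given derivations
`EuttF Eutt a b` and `EuttF Eutt b c`, induct on the first. The delicate case is `a = τ a'`,
`b = τ b'` with `a' ≈ b'`, because the second derivation may strip the τ of `b`, and nothing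
smaller than `a' ≈ b'` is left to recurse on. If `c` starts with `τ`, the two τ's are matched
instead. Otherwise the second derivation can only strip τ's from `b` before reaching `ε` or
`β(n)`, each stripped τ is absorbed into `a ≈ b`, and one inducts on the second derivation.
-/

lemma seps_ne_stau (s : StreamT) : seps ≠ stau s := fun h =>
  nomatch congrArg (fun u => (PFunctor.M.dest u).1) h

lemma seps_ne_svis (n : ℕ) (s : StreamT) : seps ≠ svis n s := fun h =>
  nomatch congrArg (fun u => (PFunctor.M.dest u).1) h

lemma stau_ne_svis (s : StreamT) (n : ℕ) (t : StreamT) : stau s ≠ svis n t := fun h =>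
  nomatch congrArg (fun u => (PFunctor.M.dest u).1) h

lemma stau_injective : Function.Injective stau := fun s t h => by
  have h' := PFunctor.M.mk_inj h
  injection h' with _ hchild
  exact congrFun hchild ()

lemma svis_inj {n m : ℕ} {s t : StreamT} : svis n s = svis m t ↔ n = m ∧ s = t := by
  refine ⟨fun h => ?_, by rintro ⟨rfl, rfl⟩; rfl⟩
  have h' := PFunctor.M.mk_inj h
  injection h' with hshape hchild
  injection hshape with hnm
  subst hnm
  exact ⟨rfl, congrFun hchild ()⟩

namespace EuttF

variable {X Y : StreamT → StreamT → Prop} {s t : StreamT}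

lemma mono (hXY : ∀ a b, X a b → Y a b) (h : EuttF X s t) : EuttF Y s t := by
  induction h with
  | eps => exact .eps
  | tau hx => exact .tau (hXY _ _ hx)
  | vis hx => exact .vis (hXY _ _ hx)
  | tauL _ ih => exact .tauL ih
  | tauR _ ih => exact .tauR ih

lemma swap (h : EuttF X s t) : EuttF (fun a b => X b a) t s := by
  induction h with
  | eps => exact .eps
  | tau hx => exact .tau hx
  | vis hx => exact .vis hx
  | tauL _ ih => exact .tauR ih
  | tauR _ ih => exact .tauL ih

end EuttF

namespace Eutt

variable {s t : StreamT}

lemma unfold (h : Eutt s t) : EuttF Eutt s t := by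
  obtain ⟨R, hR, hst⟩ := h
  exact (hR _ _ hst).mono fun _ _ hab => ⟨R, hR, hab⟩

lemma of_euttF (h : EuttF Eutt s t) : Eutt s t :=
  ⟨EuttF Eutt, fun _ _ hab => hab.mono fun _ _ => unfold, h⟩

lemma refl (s : StreamT) : Eutt s s := by
  refine ⟨Eq, ?_, rfl⟩
  rintro a _ rfl
  induction a using PFunctor.M.cases with
  | f x =>
    obtain ⟨shape, child⟩ := x
    cases shape with
    | eps =>
      obtain rfl : child = Empty.elim := funext fun e => (e : Empty).elim
      exact .eps
    | tau => exact .tau (t := child ()) rfl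
    | vis n => exact .vis (t := child ()) rfl

lemma symm (h : Eutt s t) : Eutt t s := by
  obtain ⟨R, hR, hst⟩ := h
  exact ⟨fun a b => R b a, fun _ _ hab => (hR _ _ hab).swap, hst⟩

end Eutt

namespace EuttF

variable {s t : StreamT}

lemma of_tau_left (h : EuttF Eutt (stau s) t) : EuttF Eutt s t := by
  generalize hs : stau s = s' at h
  induction h generalizing s with
  | eps => exact absurd hs.symm (seps_ne_stau _)
  | tau hx => rw [stau_injective hs]; exact .tauR hx.unfold
  | vis _ => exact absurd hs (stau_ne_svis _ _ _)
  | tauL h => rw [stau_injective hs]; exact h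
  | tauR _ ih => exact .tauR (ih hs)

lemma of_tau_right (h : EuttF Eutt s (stau t)) : EuttF Eutt s t :=
  (of_tau_left (h.swap.mono fun _ _ => Eutt.symm)).swap.mono fun _ _ => Eutt.symm

end EuttF

lemma Eutt.of_tau_left {s t : StreamT} (h : Eutt (stau s) t) : Eutt s t :=
  .of_euttF h.unfold.of_tau_left

lemma Eutt.of_tau_right {s t : StreamT} (h : Eutt s (stau t)) : Eutt s t :=
  .of_euttF h.unfold.of_tau_right

lemma euttF_comp_svis_right {n : ℕ} {x y c : StreamT} (hyc : Eutt y c)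
    (h : EuttF Eutt x (svis n y)) :
    EuttF (Relation.Comp Eutt Eutt) x (svis n c) := by
  generalize hy : svis n y = y' at h
  induction h generalizing y with
  | eps => exact absurd hy.symm (seps_ne_svis _ _)
  | tau _ => exact absurd hy.symm (stau_ne_svis _ _ _)
  | vis hx =>
    obtain ⟨rfl, rfl⟩ := svis_inj.1 hy
    exact .vis ⟨_, hx, hyc⟩
  | tauL _ ih => exact .tauL (ih hyc hy)
  | tauR _ => exact absurd hy.symm (stau_ne_svis _ _ _)

lemma euttF_comp_svis_left {n : ℕ} {a b z : StreamT} (hab : Eutt a b)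
    (h : EuttF Eutt (svis n b) z) :
    EuttF (Relation.Comp Eutt Eutt) (svis n a) z := by
  generalize hb : svis n b = b' at h
  induction h generalizing b with
  | eps => exact absurd hb.symm (seps_ne_svis _ _)
  | tau _ => exact absurd hb.symm (stau_ne_svis _ _ _)
  | vis hx =>
    obtain ⟨rfl, rfl⟩ := svis_inj.1 hb
    exact .vis ⟨_, hab, hx⟩
  | tauL _ => exact absurd hb.symm (stau_ne_svis _ _ _)
  | tauR _ ih => exact .tauR (ih hab hb)

lemma euttF_comp_of_not_stau {x y c : StreamT} (hxy : Eutt x y) (h : EuttF Eutt y c)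
    (hc : ∀ c', c ≠ stau c') : EuttF (Relation.Comp Eutt Eutt) x c := by
  induction h generalizing x with
  | eps => exact hxy.unfold.mono fun _ _ hab => ⟨_, hab, .refl _⟩
  | tau _ => exact absurd rfl (hc _)
  | vis hyc => exact euttF_comp_svis_right hyc hxy.unfold
  | tauL _ ih => exact ih hxy.of_tau_right hc
  | tauR _ => exact absurd rfl (hc _)

lemma euttF_comp {a b c : StreamT} (hab : EuttF Eutt a b) (hbc : EuttF Eutt b c) :
    EuttF (Relation.Comp Eutt Eutt) a c := by
  induction hab generalizing c with
  | eps => exact hbc.mono fun _ _ hab => ⟨_, .refl _, hab⟩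
  | @tau a' b' hab' =>
    by_cases hc : ∃ c', c = stau c'
    · obtain ⟨c', rfl⟩ := hc
      exact .tau ⟨b', hab', (Eutt.of_euttF hbc).of_tau_left.of_tau_right⟩
    · exact euttF_comp_of_not_stau (.of_euttF (.tau hab')) hbc (not_exists.mp hc)
  | vis hab' => exact euttF_comp_svis_left hab' hbc
  | tauL _ ih => exact .tauL (ih hbc)
  | tauR _ ih => exact ih hbc.of_tau_left

lemma Eutt.trans {a b c : StreamT} (hab : Eutt a b) (hbc : Eutt b c) : Eutt a c :=
  ⟨Relation.Comp Eutt Eutt, fun _ _ ⟨_, hxy, hyz⟩ => euttF_comp hxy.unfold hyz.unfold,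
    ⟨b, hab, hbc⟩⟩

theorem eutt_symm_trans_equiv :
    Symmetric Eutt ∧ Transitive Eutt ∧ Equivalence Eutt :=
  ⟨fun _ _ => Eutt.symm, fun _ _ _ => Eutt.trans, ⟨Eutt.refl, Eutt.symm, Eutt.trans⟩⟩
end

section
/- Concatenation respects weak bisimilarity: if h₁ ≈ h₂ and t₁ ≈ t₂ then h₁ ⧺ t₁ ≈ h₂ ⧺ t₂. -/
/-- One corecursion step for concatenation. State `inl k` means: copy `k`;
state `inr (s, k)` means: emit `s` until its end, then continue with `k`. -/
def concatStep : StreamT ⊕ (StreamT × StreamT) → SP.Obj (StreamT ⊕ (StreamT × StreamT))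
  | Sum.inl k => ⟨(PFunctor.M.dest k).1, fun i => Sum.inl ((PFunctor.M.dest k).2 i)⟩
  | Sum.inr (s, k) =>
    match PFunctor.M.dest s with
    | ⟨SShape.eps, _⟩ => ⟨(PFunctor.M.dest k).1, fun i => Sum.inl ((PFunctor.M.dest k).2 i)⟩
    | ⟨SShape.tau, f⟩ => ⟨SShape.tau, fun i => Sum.inr (f i, k)⟩
    | ⟨SShape.vis n, f⟩ => ⟨SShape.vis n, fun i => Sum.inr (f i, k)⟩

/-- Corecursive concatenation of streams: ε ⧺ k = k, (τ·s) ⧺ k = τ·(s ⧺ k),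
(β(n)·s) ⧺ k = β(n)·(s ⧺ k). -/
def sconcat (s k : StreamT) : StreamT :=
  PFunctor.M.corec concatStep (Sum.inr (s, k))
/-! The pairs `(s ⧺ k, s' ⧺ k')` with `s ≈ s'` and `k ≈ k'` form a bisimulation up to `≈`.
Unfold one `EuttF` layer of `s ≈ s'` by induction: τ-stripping steps on the heads become τ-stripping
steps on the concatenations, guarded steps lead back to such pairs, and when both heads end the
tails `k ≈ k'` take over. -/

open PFunctor

theorem EuttF.mono_s19 {X Y : StreamT → StreamT → Prop} (hXY : ∀ a b, X a b → Y a b)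
    {s t : StreamT} (h : EuttF X s t) : EuttF Y s t := by
  induction h with
  | eps => exact .eps
  | tau h => exact .tau (hXY _ _ h)
  | vis h => exact .vis (hXY _ _ h)
  | tauL _ ih => exact .tauL ih
  | tauR _ ih => exact .tauR ih

theorem Eutt.unfold_s19 {s t : StreamT} (h : Eutt s t) : EuttF Eutt s t := by
  obtain ⟨R, hR, hst⟩ := h
  exact (hR _ _ hst).mono_s19 fun a b hab => ⟨R, hR, hab⟩

theorem Eutt.coind_upto (R : StreamT → StreamT → Prop)
    (hR : ∀ a b, R a b → EuttF (fun x y => R x y ∨ Eutt x y) a b) {s t : StreamT} (h : R s t) :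
    Eutt s t := by
  refine ⟨fun x y => R x y ∨ Eutt x y, ?_, Or.inl h⟩
  rintro a b (hab | hab)
  · exact hR a b hab
  · exact hab.unfold_s19.mono_s19 fun _ _ => Or.inr

theorem corec_concatStep_inl (k : StreamT) : M.corec concatStep (Sum.inl k) = k := by
  refine M.bisim (fun x y => x = M.corec concatStep (Sum.inl y)) ?_ _ _ rfl
  rintro _ y rfl
  exact ⟨_, _, _, M.dest_corec _ _, rfl, fun _ => rfl⟩

theorem sconcat_eps (k : StreamT) : sconcat seps k = k := by
  rw [sconcat, M.corec_def]
  change M.mk ⟨(M.dest k).1, fun i => M.corec concatStep (Sum.inl ((M.dest k).2 i))⟩ = k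
  conv_rhs => rw [← M.mk_dest k]
  exact congrArg M.mk (Sigma.ext rfl (heq_of_eq (funext fun _ => corec_concatStep_inl _)))

theorem sconcat_tau (s k : StreamT) : sconcat (stau s) k = stau (sconcat s k) := by
  rw [sconcat, M.corec_def]; rfl

theorem sconcat_vis (n : ℕ) (s k : StreamT) : sconcat (svis n s) k = svis n (sconcat s k) := by
  rw [sconcat, M.corec_def]; rfl

theorem EuttF.sconcat {X Y : StreamT → StreamT → Prop} {s s' k k' : StreamT}
    (hXY : ∀ u u', Y u u' → X (sconcat u k) (sconcat u' k'))
    (hs : EuttF Y s s') (hk : EuttF X k k') : EuttF X (sconcat s k) (sconcat s' k') := by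
  induction hs with
  | eps => rwa [sconcat_eps, sconcat_eps]
  | tau hu => rw [sconcat_tau, sconcat_tau]; exact .tau (hXY _ _ hu)
  | vis hu => rw [sconcat_vis, sconcat_vis]; exact .vis (hXY _ _ hu)
  | tauL _ ih => rw [sconcat_tau]; exact .tauL ih
  | tauR _ ih => rw [sconcat_tau]; exact .tauR ih

theorem sconcat_congr_eutt {h₁ h₂ t₁ t₂ : StreamT}
    (hh : Eutt h₁ h₂) (ht : Eutt t₁ t₂) :
    Eutt (sconcat h₁ t₁) (sconcat h₂ t₂) := by
  refine Eutt.coind_upto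
    (fun a b => ∃ s s' k k', Eutt s s' ∧ Eutt k k' ∧ a = sconcat s k ∧ b = sconcat s' k') ?_
    ⟨h₁, h₂, t₁, t₂, hh, ht, rfl, rfl⟩
  rintro _ _ ⟨s, s', k, k', hs, hk, rfl, rfl⟩
  exact hs.unfold_s19.sconcat (fun u u' hu => Or.inl ⟨u, u', k, k', hu, hk, rfl, rfl⟩)
    (hk.unfold_s19.mono_s19 fun _ _ => Or.inr)
end
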